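/- arXiv:1909.05406 — 5 statements merged into one kernel-verified Lean document; each statement's English description precedes it below -/
import Mathlib

section
/- Let C, C' be configurations of a variation Γ (connected finite sets of positions containing the origin), v ∈ C a node, and t a time with d_C(v_gen, v) ≤ t, where v_gen is the origin. Then ai(v,t,C) = ai(v,t,C') ≠ Q (i.e., C ≡'_{t,v} C') if and only if (1) C' is a consistent extension of M(v,t,C) and (2) M(v,t,C') \ M(v,t,C) = ∅. -/
open scoped Classical

/-- Two grid positions are adjacent iff their L1 distance is 1. -/
def gridAdj (p q : ℤ × ℤ) : Prop := |p.1 - q.1| + |p.2 - q.2| = 1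

lemma gridAdj_symm {p q : ℤ × ℤ} (h : gridAdj p q) : gridAdj q p := by
  unfold gridAdj at h ⊢
  rw [abs_sub_comm q.1 p.1, abs_sub_comm q.2 p.2]
  exact h

lemma gridAdj_irrefl (p : ℤ × ℤ) : ¬ gridAdj p p := by simp [gridAdj]

/-- The graph induced on a set `X` of grid positions. -/
def gridGraph (X : Set (ℤ × ℤ)) : SimpleGraph (ℤ × ℤ) where
  Adj p q := p ∈ X ∧ q ∈ X ∧ gridAdj p q
  symm := ⟨fun p q h => ⟨h.2.1, h.1, gridAdj_symm h.2.2⟩⟩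
  loopless := ⟨fun p h => gridAdj_irrefl p h.2.2⟩

/-- Graph distance inside the set `X`. -/
noncomputable def gdist (X : Set (ℤ × ℤ)) (p q : ℤ × ℤ) : ℕ := (gridGraph X).dist p q

/-- The boundary condition of `p` in `X`: it records which of the four
neighbors of `p` lie in `X`. -/
def bcond (X : Set (ℤ × ℤ)) (p : ℤ × ℤ) : Set (ℤ × ℤ) := {q ∈ X | gridAdj p q}

/-- The set `M(v, t, X)` of nodes `w` with `d(v_gen, w) + d(w, v) ≤ t`. -/
noncomputable def Mset (v : ℤ × ℤ) (t : ℕ) (X : Set (ℤ × ℤ)) : Set (ℤ × ℤ) :=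
  {w ∈ X | gdist X (0, 0) w + gdist X w v ≤ t}

/-- The available information (local map) `ai(v, t, X)`; `none` plays the role of `Q`. -/
noncomputable def ai (v : ℤ × ℤ) (t : ℕ) (X : Set (ℤ × ℤ)) :
    Option (ℕ × (ℤ × ℤ) × Set ((ℤ × ℤ) × Set (ℤ × ℤ))) :=
  if v ∈ X ∧ (gridGraph X).Reachable (0, 0) v ∧ gdist X (0, 0) v ≤ t then
    some (t, v, (fun w => (w, bcond X w)) '' Mset v t X)
  else none

/-- `X ≡'_{t,v} Y` : `v ∈ X ∩ Y` and `ai(v,t,X) = ai(v,t,Y) ≠ Q`. -/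
def equivAt (t : ℕ) (v : ℤ × ℤ) (X Y : Set (ℤ × ℤ)) : Prop :=
  v ∈ X ∧ v ∈ Y ∧ ai v t X = ai v t Y ∧ ai v t X ≠ none

/-- A configuration: a finite connected set of positions containing the origin. -/
def IsConfig (X : Set (ℤ × ℤ)) : Prop :=
  X.Finite ∧ (0, 0) ∈ X ∧ ∀ p ∈ X, ∀ q ∈ X, (gridGraph X).Reachable p q

/-- `Y` is a consistent extension of the subset `M` of `X`. -/
def ConsExt (X M Y : Set (ℤ × ℤ)) : Prop := M ⊆ Y ∧ ∀ w ∈ M, bcond X w = bcond Y w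


/-!
For `w ∈ M(v,t,C)`, a geodesic from the origin to `w` followed by one from `w` to `v` is a walk
of length at most `t` through `w`, and every node on it again lies in `M(v,t,C)`. If `C'` agrees
with `C` on the boundary conditions of `M(v,t,C)`, this walk is also a walk in `C'`, so
`M(v,t,C) ⊆ M(v,t,C')`. Hence `ai(v,t,C) = ai(v,t,C')` exactly when the two sets `M` coincide and
carry the same boundary conditions.
-/

open SimpleGraph

lemma Set.graphOn_eq_graphOn_iff {α β : Type*} {f g : α → β} {s t : Set α} :
    s.graphOn f = t.graphOn g ↔ s = t ∧ s.EqOn f g := by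
  refine ⟨fun h => ?_, fun ⟨hst, hfg⟩ => hst ▸ Set.graphOn_inj.2 hfg⟩
  obtain rfl : s = t := by simpa [Set.graphOn, Set.image_image] using congrArg (Prod.fst '' ·) h
  exact ⟨rfl, Set.graphOn_inj.1 h⟩

lemma SimpleGraph.Walk.dist_add_dist_le_length {V : Type*} [DecidableEq V] {G : SimpleGraph V}
    {a b x : V} (p : G.Walk a b) (hx : x ∈ p.support) : G.dist a x + G.dist x b ≤ p.length :=
  calc G.dist a x + G.dist x b ≤ (p.takeUntil x hx).length + (p.dropUntil x hx).length :=
        add_le_add (dist_le _) (dist_le _)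
    _ = p.length := by rw [← Walk.length_append, Walk.take_spec]

lemma mem_of_gridGraph_reachable {X : Set (ℤ × ℤ)} {a b : ℤ × ℤ}
    (h : (gridGraph X).Reachable a b) (ha : a ∈ X) : b ∈ X := by
  induction (reachable_iff_reflTransGen a b).1 h with
  | refl => exact ha
  | tail _ hbc _ => exact hbc.2.1

lemma mem_Mset_self {X : Set (ℤ × ℤ)} {v : ℤ × ℤ} {t : ℕ} (hv : v ∈ X)
    (ht : gdist X (0, 0) v ≤ t) : v ∈ Mset v t X :=
  ⟨hv, by simpa [gdist] using ht⟩

lemma mem_Mset_of_mem_support {X : Set (ℤ × ℤ)} {v w : ℤ × ℤ} {t : ℕ} (hw : w ∈ X)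
    (p : (gridGraph X).Walk (0, 0) v) (hp : p.length ≤ t) (hwp : w ∈ p.support) :
    w ∈ Mset v t X :=
  ⟨hw, (p.dist_add_dist_le_length hwp).trans hp⟩

lemma exists_walk_of_mem_Mset {X : Set (ℤ × ℤ)} {v w : ℤ × ℤ} {t : ℕ}
    (h0w : (gridGraph X).Reachable (0, 0) w) (hwv : (gridGraph X).Reachable w v)
    (hw : w ∈ Mset v t X) :
    ∃ p : (gridGraph X).Walk (0, 0) v, w ∈ p.support ∧ p.length ≤ t := by
  obtain ⟨p, hp⟩ := h0w.exists_walk_length_eq_dist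
  obtain ⟨q, hq⟩ := hwv.exists_walk_length_eq_dist
  refine ⟨p.append q, by simp, ?_⟩
  rw [Walk.length_append, hp, hq]
  exact hw.2

namespace ConsExt

variable {X S Y : Set (ℤ × ℤ)}

lemma gridGraph_adj (h : ConsExt X S Y) {a b : ℤ × ℤ} (ha : a ∈ S)
    (hab : (gridGraph X).Adj a b) : (gridGraph Y).Adj a b := by
  have hb : b ∈ bcond Y a := h.2 a ha ▸ ⟨hab.2.1, hab.2.2⟩
  exact ⟨h.1 ha, hb⟩

lemma edges_subset_edgeSet (h : ConsExt X S Y) {a b : ℤ × ℤ} (p : (gridGraph X).Walk a b)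
    (hp : ∀ x ∈ p.support, x ∈ S) : ∀ e ∈ p.edges, e ∈ (gridGraph Y).edgeSet := by
  intro e he
  induction e using Sym2.ind with
  | h x y =>
    exact h.gridGraph_adj (hp x (p.fst_mem_support_of_mem_edges he)) (p.adj_of_mem_edges he)

end ConsExt

lemma exists_walk_of_consExt {C C' : Set (ℤ × ℤ)} (hC : IsConfig C) {v : ℤ × ℤ}
    (hv : v ∈ C) {t : ℕ} (h : ConsExt C (Mset v t C) C') {w : ℤ × ℤ}
    (hw : w ∈ Mset v t C) :
    ∃ q : (gridGraph C').Walk (0, 0) v, w ∈ q.support ∧ q.length ≤ t := by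
  obtain ⟨-, h0, hconn⟩ := hC
  obtain ⟨p, hwp, hp⟩ := exists_walk_of_mem_Mset (hconn _ h0 _ hw.1) (hconn _ hw.1 _ hv) hw
  have hsupp : ∀ x ∈ p.support, x ∈ Mset v t C := fun x hx =>
    mem_Mset_of_mem_support (mem_of_gridGraph_reachable ⟨p.takeUntil x hx⟩ h0) p hp hx
  refine ⟨p.transfer _ (h.edges_subset_edgeSet p hsupp), ?_, ?_⟩
  · rwa [Walk.support_transfer]
  · rwa [Walk.length_transfer]

lemma Mset_subset_Mset_of_consExt {C C' : Set (ℤ × ℤ)} (hC : IsConfig C) {v : ℤ × ℤ}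
    (hv : v ∈ C) {t : ℕ} (h : ConsExt C (Mset v t C) C') : Mset v t C ⊆ Mset v t C' := by
  intro w hw
  obtain ⟨q, hwq, hq⟩ := exists_walk_of_consExt hC hv h hw
  exact mem_Mset_of_mem_support (h.1 hw) q hq hwq

lemma ai_of_reachable {X : Set (ℤ × ℤ)} {v : ℤ × ℤ} {t : ℕ}
    (h : v ∈ X ∧ (gridGraph X).Reachable (0, 0) v ∧ gdist X (0, 0) v ≤ t) :
    ai v t X = some (t, v, (Mset v t X).graphOn (bcond X)) :=
  if_pos h

lemma ai_ne_none_iff {X : Set (ℤ × ℤ)} {v : ℤ × ℤ} {t : ℕ} :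
    ai v t X ≠ none ↔
      v ∈ X ∧ (gridGraph X).Reachable (0, 0) v ∧ gdist X (0, 0) v ≤ t := by
  unfold ai
  split_ifs with h <;> simp [h]

theorem stmt2_general (C C' : Set (ℤ × ℤ)) (hC : IsConfig C)
    (v : ℤ × ℤ) (hv : v ∈ C) (t : ℕ) (ht : gdist C (0, 0) v ≤ t) :
    equivAt t v C C' ↔
      ConsExt C (Mset v t C) C' ∧ Mset v t C' \ Mset v t C = ∅ := by
  have hcond : v ∈ C ∧ (gridGraph C).Reachable (0, 0) v ∧ gdist C (0, 0) v ≤ t :=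
    ⟨hv, hC.2.2 _ hC.2.1 v hv, ht⟩
  constructor
  · rintro ⟨-, -, hai, hne⟩
    have hcond' := ai_ne_none_iff.1 (hai ▸ hne)
    rw [ai_of_reachable hcond, ai_of_reachable hcond', Option.some_inj, Prod.mk.injEq,
      Prod.mk.injEq, Set.graphOn_eq_graphOn_iff] at hai
    obtain ⟨-, -, hM, hbc⟩ := hai
    exact ⟨⟨fun w hw => (hM ▸ hw).1, hbc⟩, by rw [hM, Set.sdiff_self]⟩
  · rintro ⟨hext, hdiff⟩
    have hvM := mem_Mset_self hv ht
    obtain ⟨q, -, hq⟩ := exists_walk_of_consExt hC hv hext hvM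
    have hcond' : v ∈ C' ∧ (gridGraph C').Reachable (0, 0) v ∧ gdist C' (0, 0) v ≤ t :=
      ⟨hext.1 hvM, ⟨q⟩, (dist_le q).trans hq⟩
    have hM : Mset v t C = Mset v t C' :=
      (Mset_subset_Mset_of_consExt hC hv hext).antisymm (Set.sdiff_eq_empty.1 hdiff)
    have hai : ai v t C = ai v t C' := by
      rw [ai_of_reachable hcond, ai_of_reachable hcond', ← hM, Set.graphOn_inj.2 hext.2]
    exact ⟨hv, hcond'.1, hai, ai_ne_none_iff.2 hcond⟩

theorem stmt2 (C C' : Set (ℤ × ℤ)) (hC : IsConfig C) (hC' : IsConfig C')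
    (v : ℤ × ℤ) (hv : v ∈ C) (t : ℕ) (ht : gdist C (0, 0) v ≤ t) :
    equivAt t v C C' ↔
      ConsExt C (Mset v t C) C' ∧ Mset v t C' \ Mset v t C = ∅ :=
  stmt2_general C C' hC v hv t ht
end

section
/- Suppose Γ is a sub-variation of g-kPATH (k = 2 or 3). For configurations C = p_r…p_s and C' of Γ, a node v = p_u ∈ C with d_C(p_0, v) ≤ t, one has C ≡'_{t,v} C' if and only if C' is a consistent extension of M(v,t,C); that is, for path configurations the condition M(v,t,C') \ M(v,t,C) = ∅ follows automatically from consistency. -/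
open scoped Classical

/-- Two positions of the k-dimensional grid are adjacent iff their L1 distance is 1. -/
def adjK {k : ℕ} (p q : Fin k → ℤ) : Prop := ∑ i, |p i - q i| = 1

lemma adjK_symm {k : ℕ} {p q : Fin k → ℤ} (h : adjK p q) : adjK q p := by
  unfold adjK at h ⊢
  rw [← h]
  exact Finset.sum_congr rfl fun i _ => abs_sub_comm _ _

lemma adjK_irrefl {k : ℕ} (p : Fin k → ℤ) : ¬ adjK p p := by simp [adjK]

/-- The graph induced on a set `X` of grid positions. -/
def gridGraphK {k : ℕ} (X : Set (Fin k → ℤ)) : SimpleGraph (Fin k → ℤ) where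
  Adj p q := p ∈ X ∧ q ∈ X ∧ adjK p q
  symm := ⟨fun p q h => ⟨h.2.1, h.1, adjK_symm h.2.2⟩⟩
  loopless := ⟨fun p h => adjK_irrefl p h.2.2⟩

/-- Graph distance inside `X`. -/
noncomputable def gdistK {k : ℕ} (X : Set (Fin k → ℤ)) (p q : Fin k → ℤ) : ℕ :=
  (gridGraphK X).dist p q

/-- Boundary condition: the set of the `2k` neighbors of `p` that lie in `X`. -/
def bcondK {k : ℕ} (X : Set (Fin k → ℤ)) (p : Fin k → ℤ) : Set (Fin k → ℤ) :=
  {q ∈ X | adjK p q}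

noncomputable def MsetK {k : ℕ} (v : Fin k → ℤ) (t : ℕ) (X : Set (Fin k → ℤ)) :
    Set (Fin k → ℤ) :=
  {w ∈ X | gdistK X 0 w + gdistK X w v ≤ t}

/-- Available information (local map); `none` plays the role of `Q`. -/
noncomputable def aiK {k : ℕ} (v : Fin k → ℤ) (t : ℕ) (X : Set (Fin k → ℤ)) :
    Option (ℕ × (Fin k → ℤ) × Set ((Fin k → ℤ) × Set (Fin k → ℤ))) :=
  if v ∈ X ∧ (gridGraphK X).Reachable 0 v ∧ gdistK X 0 v ≤ t then
    some (t, v, (fun w => (w, bcondK X w)) '' MsetK v t X)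
  else none

/-- `X ≡'_{t,v} Y`. -/
def equivAtK {k : ℕ} (t : ℕ) (v : Fin k → ℤ) (X Y : Set (Fin k → ℤ)) : Prop :=
  v ∈ X ∧ v ∈ Y ∧ aiK v t X = aiK v t Y ∧ aiK v t X ≠ none

/-- `Y` is a consistent extension of the subset `M` of `X`. -/
def ConsExtK {k : ℕ} (X M Y : Set (Fin k → ℤ)) : Prop :=
  M ⊆ Y ∧ ∀ w ∈ M, bcondK X w = bcondK Y w

/-- A simple non-self-touching lattice path on the index interval `[r, s]`
through the origin (a g-kPATH configuration). -/
def IsPathOnK {k : ℕ} (p : ℤ → Fin k → ℤ) (r s : ℤ) : Prop :=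
  r ≤ 0 ∧ 0 ≤ s ∧ p 0 = 0 ∧
    (∀ m, r ≤ m → m < s → adjK (p m) (p (m + 1))) ∧
    (∀ m n, r ≤ m → m ≤ s → r ≤ n → n ≤ s → p m = p n → m = n) ∧
    (∀ m n, r ≤ m → m + 2 ≤ n → n ≤ s → ¬ adjK (p m) (p n))

/-- A configuration of g-kPATH. -/
structure GPathK (k : ℕ) where
  r : ℤ
  s : ℤ
  p : ℤ → Fin k → ℤ
  isPath : IsPathOnK p r s

def pathSetK {k : ℕ} (C : GPathK k) : Set (Fin k → ℤ) := C.p '' Set.Icc C.r C.s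

/-!
For a path `C`, graph distance along `C` is the index distance, so `M(v, t, C)` is the segment
`C.p '' [a, b]` of indices with `|i| + |i - u| ≤ t`, an interval containing `0` and `u`.
If `C'` contains this segment, the unit steps of `C` are unit steps of `C'`, and since `C'`
does not backtrack the segment is traversed by `C'` as `i ↦ ε i` with `ε = ±1`. So `C'` measures
the same distances on it, which gives `M(v, t, C) ⊆ M(v, t, C')`. Conversely, if `C'` went on
past an end `e` of the segment while staying within `M(v, t, C')`, its next point would be a
neighbor of `C.p e` in `C'`, hence by consistency a neighbor in `C` outside the segment, which is
too far from `p₀` and `v`.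
-/

open Set

theorem exists_Icc_eq_setOf_natAbs_add_natAbs_sub_le (r s u : ℤ) {t : ℕ} (hu : u.natAbs ≤ t) :
    ∃ a b : ℤ, Icc a b = {i ∈ Icc r s | i.natAbs + (i - u).natAbs ≤ t} := by
  -- `|i| + |i - u| = max |2i - u| |u|`
  refine ⟨max r (-((t - u) / 2)), min s ((u + t) / 2), ?_⟩
  ext i
  simp only [mem_Icc, mem_ofPred_eq]
  omega

theorem exists_eq_add_mul_of_natAbs_sub_eq_one {a b : ℤ} {g : ℤ → ℤ}
    (hstep : ∀ i ∈ Ico a b, (g (i + 1) - g i).natAbs = 1) (hinj : InjOn g (Icc a b)) :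
    ∃ ε : ℤ, (ε = 1 ∨ ε = -1) ∧ ∀ i ∈ Icc a b, g i = g a + ε * (i - a) := by
  set ε := if a < b then g (a + 1) - g a else 1
  have hε : ε = 1 ∨ ε = -1 := by
    by_cases hab : a < b
    · have hfirst := hstep a ⟨le_rfl, hab⟩
      simp only [ε, if_pos hab]
      omega
    · simp [ε, hab]
  have hsucc : ∀ i ∈ Ico a b, g (i + 1) = g i + ε := by
    intro i hi
    obtain ⟨hai, hib⟩ := hi
    induction i, hai using Int.leInduction with
    | base => simp only [ε, if_pos hib]; ring
    | succ i hai ih =>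
      have hprev := ih (by omega)
      have hnext := hstep (i + 1) ⟨by omega, hib⟩
      have hrev : g (i + 1 + 1) ≠ g i := fun h =>
        absurd (hinj ⟨by omega, by omega⟩ ⟨by omega, by omega⟩ h) (by omega)
      omega
  refine ⟨ε, hε, fun i hi => ?_⟩
  obtain ⟨hai, hib⟩ := hi
  induction i, hai using Int.leInduction with
  | base => ring
  | succ i hai ih => rw [hsucc i ⟨hai, by omega⟩, ih (by omega)]; ring

theorem consExtK_of_equivAtK {k : ℕ} {t : ℕ} {v : Fin k → ℤ} {X Y : Set (Fin k → ℤ)}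
    (h : equivAtK t v X Y) : ConsExtK X (MsetK v t X) Y := by
  obtain ⟨-, -, heq, hne⟩ := h
  have hX : v ∈ X ∧ (gridGraphK X).Reachable 0 v ∧ gdistK X 0 v ≤ t := by
    by_contra hX; exact hne (if_neg hX)
  have hY : v ∈ Y ∧ (gridGraphK Y).Reachable 0 v ∧ gdistK Y 0 v ≤ t := by
    by_contra hY; exact hne (heq.trans (if_neg hY))
  simp only [aiK, if_pos hX, if_pos hY, Option.some.injEq, Prod.mk.injEq, true_and] at heq
  have hmem : ∀ w ∈ MsetK v t X, ∃ w' ∈ MsetK v t Y, w' = w ∧ bcondK Y w' = bcondK X w :=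
    fun w hw => by simpa using heq.le (mem_image_of_mem _ hw)
  refine ⟨fun w hw => ?_, fun w hw => ?_⟩
  · obtain ⟨w', hw', rfl, -⟩ := hmem w hw
    exact hw'.1
  · obtain ⟨w', -, rfl, hbc⟩ := hmem w hw
    exact hbc.symm

theorem equivAtK_of_consExtK {k : ℕ} {t : ℕ} {v : Fin k → ℤ} {X Y : Set (Fin k → ℤ)}
    (hX : ∀ x ∈ X, (gridGraphK X).Reachable 0 x) (hY : ∀ y ∈ Y, (gridGraphK Y).Reachable 0 y)
    (hv : v ∈ X) (ht : gdistK X 0 v ≤ t) (h : ConsExtK X (MsetK v t X) Y)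
    (hM : MsetK v t Y = MsetK v t X) : equivAtK t v X Y := by
  have hvM : v ∈ MsetK v t X := ⟨hv, by simpa [gdistK] using ht⟩
  obtain ⟨hvY, htY⟩ : v ∈ MsetK v t Y := hM ▸ hvM
  have hcX : v ∈ X ∧ (gridGraphK X).Reachable 0 v ∧ gdistK X 0 v ≤ t := ⟨hv, hX v hv, ht⟩
  have hcY : v ∈ Y ∧ (gridGraphK Y).Reachable 0 v ∧ gdistK Y 0 v ≤ t :=
    ⟨hvY, hY v hvY, by simpa [gdistK] using htY⟩
  refine ⟨hv, hvY, ?_, by simp [aiK, if_pos hcX]⟩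
  simp only [aiK, if_pos hcX, if_pos hcY, hM]
  congr 3
  exact image_congr fun w hw => by rw [h.2 w hw]

namespace GPathK

variable {k : ℕ}

section

variable (C : GPathK k)

theorem r_nonpos : C.r ≤ 0 := C.isPath.1

theorem s_nonneg : 0 ≤ C.s := C.isPath.2.1

theorem zero_mem_Icc : (0 : ℤ) ∈ Icc C.r C.s := ⟨C.r_nonpos, C.s_nonneg⟩

theorem p_zero : C.p 0 = 0 := C.isPath.2.2.1

theorem injOn : InjOn C.p (Icc C.r C.s) :=
  fun m hm n hn h => C.isPath.2.2.2.2.1 m n hm.1 hm.2 hn.1 hn.2 h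

theorem p_mem {i : ℤ} (hi : i ∈ Icc C.r C.s) : C.p i ∈ pathSetK C := mem_image_of_mem _ hi

theorem adjK_iff {m n : ℤ} (hm : m ∈ Icc C.r C.s) (hn : n ∈ Icc C.r C.s) :
    adjK (C.p m) (C.p n) ↔ (m - n).natAbs = 1 := by
  have hstep := C.isPath.2.2.2.1
  have hnontouch := C.isPath.2.2.2.2.2
  constructor
  · intro h
    by_contra hne
    rcases (by omega : m = n ∨ m + 2 ≤ n ∨ n + 2 ≤ m) with rfl | hmn | hnm
    · exact adjK_irrefl _ h
    · exact hnontouch m n hm.1 hmn hn.2 h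
    · exact hnontouch n m hn.1 hnm hm.2 (adjK_symm h)
  · intro h
    rcases (by omega : n = m + 1 ∨ m = n + 1) with rfl | rfl
    · exact hstep m hm.1 (by have := hn.2; omega)
    · exact adjK_symm (hstep n hn.1 (by have := hm.2; omega))

theorem gridGraphK_adj_iff {m n : ℤ} (hm : m ∈ Icc C.r C.s) (hn : n ∈ Icc C.r C.s) :
    (gridGraphK (pathSetK C)).Adj (C.p m) (C.p n) ↔ (m - n).natAbs = 1 :=
  ⟨fun h => (C.adjK_iff hm hn).1 h.2.2,
    fun h => ⟨C.p_mem hm, C.p_mem hn, (C.adjK_iff hm hn).2 h⟩⟩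

theorem natAbs_sub_le_length {x y : Fin k → ℤ} (w : (gridGraphK (pathSetK C)).Walk x y)
    {i j : ℤ} (hi : i ∈ Icc C.r C.s) (hj : j ∈ Icc C.r C.s) (hx : C.p i = x) (hy : C.p j = y) :
    (i - j).natAbs ≤ w.length := by
  induction w generalizing i with
  | nil => simp [C.injOn hi hj (hx.trans hy.symm)]
  | cons hadj w ih =>
    obtain ⟨n, hn, rfl⟩ := hadj.2.1
    subst hx
    have hin := (C.gridGraphK_adj_iff hi hn).1 hadj
    have hlen := ih hn rfl hy
    rw [SimpleGraph.Walk.length_cons]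
    omega

theorem exists_walk_length_eq {i j : ℤ} (hi : i ∈ Icc C.r C.s) (hj : j ∈ Icc C.r C.s) :
    ∃ w : (gridGraphK (pathSetK C)).Walk (C.p i) (C.p j), w.length = (i - j).natAbs := by
  wlog hij : i ≤ j generalizing i j
  · obtain ⟨w, hw⟩ := this hj hi (by omega)
    exact ⟨w.reverse, by rw [SimpleGraph.Walk.length_reverse, hw]; omega⟩
  revert hj
  induction j, hij using Int.leInduction with
  | base => exact fun _ => ⟨.nil, by simp⟩
  | succ j hij ih =>
    intro hj
    have hri := hi.1
    have hjs := hj.2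
    obtain ⟨w, hw⟩ := ih ⟨by omega, by omega⟩
    have hadj := (C.gridGraphK_adj_iff (m := j) ⟨by omega, by omega⟩ hj).2 (by omega)
    exact ⟨w.concat hadj, by rw [SimpleGraph.Walk.length_concat, hw]; omega⟩

theorem gdistK_eq {i j : ℤ} (hi : i ∈ Icc C.r C.s) (hj : j ∈ Icc C.r C.s) :
    gdistK (pathSetK C) (C.p i) (C.p j) = (i - j).natAbs := by
  obtain ⟨w, hw⟩ := C.exists_walk_length_eq hi hj
  obtain ⟨w', hw'⟩ := w.reachable.exists_walk_length_eq_dist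
  refine le_antisymm (hw ▸ SimpleGraph.dist_le w) ?_
  rw [gdistK, ← hw']
  exact C.natAbs_sub_le_length w' hi hj rfl rfl

theorem reachable_zero {x : Fin k → ℤ} (hx : x ∈ pathSetK C) :
    (gridGraphK (pathSetK C)).Reachable 0 x := by
  obtain ⟨i, hi, rfl⟩ := hx
  exact C.p_zero ▸ ⟨(C.exists_walk_length_eq C.zero_mem_Icc hi).choose⟩

theorem mem_MsetK_iff {u : ℤ} (hu : u ∈ Icc C.r C.s) {t : ℕ} {x : Fin k → ℤ} :
    x ∈ MsetK (C.p u) t (pathSetK C) ↔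
      ∃ i ∈ Icc C.r C.s, i.natAbs + (i - u).natAbs ≤ t ∧ C.p i = x := by
  constructor
  · rintro ⟨⟨i, hi, rfl⟩, hd⟩
    rw [← C.p_zero, C.gdistK_eq C.zero_mem_Icc hi, C.gdistK_eq hi hu] at hd
    exact ⟨i, hi, by omega, rfl⟩
  · rintro ⟨i, hi, hd, rfl⟩
    refine ⟨C.p_mem hi, ?_⟩
    rw [← C.p_zero, C.gdistK_eq C.zero_mem_Icc hi, C.gdistK_eq hi hu]
    omega

theorem exists_MsetK_eq_image_Icc {u : ℤ} (hu : u ∈ Icc C.r C.s) {t : ℕ} (ht : u.natAbs ≤ t) :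
    ∃ a b : ℤ, (∀ i, i ∈ Icc a b ↔ i ∈ Icc C.r C.s ∧ i.natAbs + (i - u).natAbs ≤ t) ∧
      MsetK (C.p u) t (pathSetK C) = C.p '' Icc a b := by
  obtain ⟨a, b, hI⟩ := exists_Icc_eq_setOf_natAbs_add_natAbs_sub_le C.r C.s u ht
  have hmemI : ∀ i, i ∈ Icc a b ↔ i ∈ Icc C.r C.s ∧ i.natAbs + (i - u).natAbs ≤ t :=
    fun i => by rw [hI]; rfl
  refine ⟨a, b, hmemI, ?_⟩
  ext x
  simp only [C.mem_MsetK_iff hu, mem_image, hmemI, and_assoc]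

end

variable {C C' : GPathK k}

theorem exists_eq_p_of_bcondK_eq {e e' j : ℤ} (he : e ∈ Icc C.r C.s) (he' : e' ∈ Icc C'.r C'.s)
    (hj : j ∈ Icc C'.r C'.s) (hje : (j - e').natAbs = 1) (hp : C'.p e' = C.p e)
    (hbc : bcondK (pathSetK C) (C.p e) = bcondK (pathSetK C') (C.p e)) :
    ∃ n ∈ Icc C.r C.s, (n - e).natAbs = 1 ∧ C.p n = C'.p j := by
  have hq : C'.p j ∈ bcondK (pathSetK C') (C.p e) :=
    ⟨C'.p_mem hj, hp ▸ (C'.adjK_iff he' hj).2 (by omega)⟩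
  rw [← hbc] at hq
  obtain ⟨⟨n, hn, hnj⟩, hadj⟩ := hq
  rw [← hnj, C.adjK_iff he hn] at hadj
  exact ⟨n, hn, by omega, hnj⟩

theorem exists_reindex_of_image_subset {a b : ℤ} (hab : Icc a b ⊆ Icc C.r C.s)
    (h0 : (0 : ℤ) ∈ Icc a b) (hsub : C.p '' Icc a b ⊆ pathSetK C') :
    ∃ ε : ℤ, (ε = 1 ∨ ε = -1) ∧
      ∀ i ∈ Icc a b, ε * i ∈ Icc C'.r C'.s ∧ C'.p (ε * i) = C.p i := by
  set g := fun i => Function.invFunOn C'.p (Icc C'.r C'.s) (C.p i)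
  have hg : ∀ i ∈ Icc a b, g i ∈ Icc C'.r C'.s ∧ C'.p (g i) = C.p i :=
    fun i hi => Function.invFunOn_pos (hsub (mem_image_of_mem _ hi))
  have hstep : ∀ i ∈ Ico a b, (g (i + 1) - g i).natAbs = 1 := by
    intro i hi
    have hi' : i ∈ Icc a b := Ico_subset_Icc_self hi
    have hi1 : i + 1 ∈ Icc a b := ⟨by have := hi.1; omega, hi.2⟩
    have hadj : adjK (C'.p (g (i + 1))) (C'.p (g i)) := by
      rw [(hg _ hi1).2, (hg _ hi').2, C.adjK_iff (hab hi1) (hab hi')]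
      simp
    exact (C'.adjK_iff (hg _ hi1).1 (hg _ hi').1).1 hadj
  have hinj : InjOn g (Icc a b) := fun i hi j hj h =>
    C.injOn (hab hi) (hab hj) ((hg i hi).2.symm.trans (h ▸ (hg j hj).2))
  obtain ⟨ε, hε, hlin⟩ := exists_eq_add_mul_of_natAbs_sub_eq_one hstep hinj
  have hg0 : g 0 = 0 :=
    C'.injOn (hg 0 h0).1 C'.zero_mem_Icc (by rw [(hg 0 h0).2, C.p_zero, C'.p_zero])
  refine ⟨ε, hε, fun i hi => ?_⟩
  have hgi : g i = ε * i := by linear_combination hlin i hi - hlin 0 h0 + hg0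
  exact hgi ▸ hg i hi

theorem exists_neighbor_not_mem_of_bcondK_eq {a b ε e δ : ℤ} (hab : Icc a b ⊆ Icc C.r C.s)
    (hε : ε = 1 ∨ ε = -1) (hemb : ∀ i ∈ Icc a b, ε * i ∈ Icc C'.r C'.s ∧ C'.p (ε * i) = C.p i)
    (he : e ∈ Icc a b) (hbc : bcondK (pathSetK C) (C.p e) = bcondK (pathSetK C') (C.p e))
    (hδ : δ.natAbs = 1) (hout : e + δ ∉ Icc a b) (hin : ε * (e + δ) ∈ Icc C'.r C'.s) :
    ∃ n ∈ Icc C.r C.s, n ∉ Icc a b ∧ (n - e).natAbs = 1 := by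
  obtain ⟨n, hn, hne, hpn⟩ := exists_eq_p_of_bcondK_eq (hab he) (hemb e he).1 hin
    (by rcases hε with rfl | rfl <;> omega) (hemb e he).2 hbc
  refine ⟨n, hn, fun hnI => hout ?_, hne⟩
  have hεn := C'.injOn (hemb n hnI).1 hin ((hemb n hnI).2.trans hpn)
  rwa [← mul_left_cancel₀ (by omega : ε ≠ 0) hεn]

theorem MsetK_eq_of_consExtK {u : ℤ} (hu : u ∈ Icc C.r C.s) {t : ℕ} (ht : u.natAbs ≤ t)
    (h : ConsExtK (pathSetK C) (MsetK (C.p u) t (pathSetK C)) (pathSetK C')) :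
    MsetK (C.p u) t (pathSetK C') = MsetK (C.p u) t (pathSetK C) := by
  obtain ⟨a, b, hmemI, hM⟩ := C.exists_MsetK_eq_image_Icc hu ht
  have h0 : (0 : ℤ) ∈ Icc a b := (hmemI 0).2 ⟨C.zero_mem_Icc, by simpa using ht⟩
  have huI : u ∈ Icc a b := (hmemI u).2 ⟨hu, by simpa using ht⟩
  have hab : Icc a b ⊆ Icc C.r C.s := fun i hi => ((hmemI i).1 hi).1
  obtain ⟨ε, hε, hemb⟩ := exists_reindex_of_image_subset hab h0 (hM ▸ h.1)
  have ⟨ha0, h0b⟩ := h0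
  have ⟨hau, hub⟩ := huI
  have hexit : ∀ e δ, e ∈ Icc a b → δ.natAbs = 1 → e + δ ∉ Icc a b →
      ε * (e + δ) ∈ Icc C'.r C'.s → t < (e + δ).natAbs + (e + δ - u).natAbs := by
    intro e δ he hδ hout hin
    obtain ⟨n, hn, hnI, hne⟩ := exists_neighbor_not_mem_of_bcondK_eq hab hε hemb he
      (h.2 _ (hM ▸ mem_image_of_mem _ he)) hδ hout hin
    have hnt := (hmemI n).not.1 hnI
    simp only [mem_Icc, not_and, not_le] at hout hnI hnt he hn
    omega
  rw [hM, ← (hemb u huI).2]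
  ext x
  rw [C'.mem_MsetK_iff (hemb u huI).1]
  constructor
  · rintro ⟨j, ⟨hrj, hjs⟩, hjt, rfl⟩
    have hfi : (ε * j).natAbs + (ε * j - u).natAbs ≤ t := by rcases hε with rfl | rfl <;> omega
    have hi : ε * j ∈ Icc a b := by
      by_contra hi
      have hr' := C'.r_nonpos
      have hs' := C'.s_nonneg
      -- the exit point `b + 1` (or `a - 1`) lies between `0` and `ε * j`, so by convexity
      -- of `|i| + |i - u|` it is within budget `t`, contradicting `hexit`
      rcases (by simp only [mem_Icc, not_and, not_le] at hi; omega : b < ε * j ∨ ε * j < a)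
        with hb | ha
      · have hbt := hexit b 1 ⟨by omega, le_rfl⟩ rfl (by simp) <| by
          rcases hε with rfl | rfl <;> constructor <;> omega
        omega
      · have hat := hexit a (-1) ⟨le_rfl, by omega⟩ rfl (by simp) <| by
          rcases hε with rfl | rfl <;> constructor <;> omega
        omega
    refine ⟨ε * j, hi, ?_⟩
    rw [← (hemb _ hi).2, ← mul_assoc]
    rcases hε with rfl | rfl <;> simp
  · rintro ⟨i, hi, rfl⟩
    refine ⟨ε * i, (hemb i hi).1, ?_, (hemb i hi).2⟩
    have hit := ((hmemI i).1 hi).2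
    rcases hε with rfl | rfl <;> omega

end GPathK

theorem stmt5_general (k : ℕ) (C C' : GPathK k) (u : ℤ)
    (hu1 : C.r ≤ u) (hu2 : u ≤ C.s) (t : ℕ)
    (ht : gdistK (pathSetK C) 0 (C.p u) ≤ t) :
    equivAtK t (C.p u) (pathSetK C) (pathSetK C') ↔
      ConsExtK (pathSetK C) (MsetK (C.p u) t (pathSetK C)) (pathSetK C') := by
  have hu : u ∈ Icc C.r C.s := ⟨hu1, hu2⟩
  have htu : u.natAbs ≤ t := by
    rwa [← C.p_zero, C.gdistK_eq C.zero_mem_Icc hu, zero_sub, Int.natAbs_neg] at ht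
  exact ⟨consExtK_of_equivAtK, fun h =>
    equivAtK_of_consExtK (fun _ => C.reachable_zero) (fun _ => C'.reachable_zero) (C.p_mem hu) ht
      h (GPathK.MsetK_eq_of_consExtK hu htu h)⟩

theorem stmt5 (k : ℕ) (hk : k = 2 ∨ k = 3) (C C' : GPathK k) (u : ℤ)
    (hu1 : C.r ≤ u) (hu2 : u ≤ C.s) (t : ℕ)
    (ht : gdistK (pathSetK C) 0 (C.p u) ≤ t) :
    equivAtK t (C.p u) (pathSetK C) (pathSetK C') ↔
      ConsExtK (pathSetK C) (MsetK (C.p u) t (pathSetK C)) (pathSetK C') :=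
  stmt5_general k C C' u hu1 hu2 t ht
end

section
/- Let C = p_r … p_s be a configuration of g-2PATH satisfying the condition of noninterference of extensions (CNI). If (i,j) ∈ K and i+1 ≤ 0, then V(i,j) = V(i+1,j); symmetrically, if (i,j) ∈ K and 0 ≤ j−1, then U(i,j) = U(i,j−1). -/
open scoped Classical

/-- `p` restricted to the index interval `[r, s]` is a simple, non-self-touching
lattice path through the origin `p 0 = (0,0)` (a g-2PATH configuration). -/
def IsPathOn (p : ℤ → ℤ × ℤ) (r s : ℤ) : Prop :=
  r ≤ 0 ∧ 0 ≤ s ∧ p 0 = (0, 0) ∧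
    (∀ m, r ≤ m → m < s → gridAdj (p m) (p (m + 1))) ∧
    (∀ m n, r ≤ m → m ≤ s → r ≤ n → n ≤ s → p m = p n → m = n) ∧
    (∀ m n, r ≤ m → m + 2 ≤ n → n ≤ s → ¬ gridAdj (p m) (p n))

/-- A configuration of g-2PATH. -/
structure GPath2 where
  r : ℤ
  s : ℤ
  p : ℤ → ℤ × ℤ
  isPath : IsPathOn p r s

/-- The set of positions of the path. -/
def pathSet (C : GPath2) : Set (ℤ × ℤ) := C.p '' Set.Icc C.r C.s

/-- The path obtained from the sub-path `p_i … p_j` of `C` by appending the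
sequence `x0` on the left and `x1` on the right. -/
def extFun (C : GPath2) (i j : ℤ) (x0 x1 : List (ℤ × ℤ)) : ℤ → ℤ × ℤ := fun m =>
  if m < i then x0.getD (m - (i - x0.length)).toNat (0, 0)
  else if m ≤ j then C.p m
  else x1.getD (m - (j + 1)).toNat (0, 0)

/-- `(x0, x1)` is a pair of sequences of positions such that `x0 p_i … p_j x1`
is a configuration of g-2PATH that is a consistent extension of the sub-path
`p_i … p_j` of `C` (boundary conditions of `p_i … p_j` are preserved). -/
def IsExtPair (C : GPath2) (i j : ℤ) (x0 x1 : List (ℤ × ℤ)) : Prop :=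
  C.r ≤ i ∧ i ≤ 0 ∧ 0 ≤ j ∧ j ≤ C.s ∧
    IsPathOn (extFun C i j x0 x1) (i - x0.length) (j + x1.length) ∧
    ∀ m, i ≤ m → m ≤ j →
      bcond (pathSet C) (C.p m) =
        bcond (extFun C i j x0 x1 '' Set.Icc (i - (x0.length : ℤ)) (j + (x1.length : ℤ)))
          (C.p m)

def Wset (C : GPath2) (i j : ℤ) : Set (List (ℤ × ℤ) × List (ℤ × ℤ)) :=
  {w | IsExtPair C i j w.1 w.2}

def Uset (C : GPath2) (i j : ℤ) : Set (List (ℤ × ℤ)) := Prod.fst '' Wset C i j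

def Vset (C : GPath2) (i j : ℤ) : Set (List (ℤ × ℤ)) := Prod.snd '' Wset C i j

/-- `f(i,j)`: the supremum of lengths of consistent left extensions. -/
noncomputable def fval (C : GPath2) (i j : ℤ) : ENat := ⨆ x ∈ Uset C i j, (x.length : ENat)

/-- `g(i,j)`: the supremum of lengths of consistent right extensions. -/
noncomputable def gval (C : GPath2) (i j : ℤ) : ENat := ⨆ x ∈ Vset C i j, (x.length : ENat)

/-- `NI(i,j)` : `W(i,j) = U(i,j) × V(i,j)`. -/
def NI (C : GPath2) (i j : ℤ) : Prop := Wset C i j = Uset C i j ×ˢ Vset C i j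

def Kset (C : GPath2) : Set (ℤ × ℤ) :=
  {ij | C.r ≤ ij.1 ∧ ij.1 ≤ 0 ∧ 0 ≤ ij.2 ∧ ij.2 ≤ C.s ∧ (Wset C ij.1 ij.2).Finite}

def Iset (C : GPath2) : Set (ℤ × ℤ) :=
  {ij | C.r ≤ ij.1 - 1 ∧ ij.1 ≤ 0 ∧ 0 ≤ ij.2 ∧ ij.2 ≤ C.s ∧
    (Wset C ij.1 ij.2).Infinite ∧ (Wset C (ij.1 - 1) ij.2).Finite}

def Jset (C : GPath2) : Set (ℤ × ℤ) :=
  {ij | C.r ≤ ij.1 ∧ ij.1 ≤ 0 ∧ 0 ≤ ij.2 ∧ ij.2 + 1 ≤ C.s ∧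
    (Wset C ij.1 ij.2).Infinite ∧ (Wset C ij.1 (ij.2 + 1)).Finite}

/-- The condition of noninterference of extensions. -/
def CNI (C : GPath2) : Prop := ∀ ij ∈ Kset C ∪ Iset C ∪ Jset C, NI C ij.1 ij.2

/-- The radius of `X`: the largest distance from the origin within `X`. -/
noncomputable def rad (X : Set (ℤ × ℤ)) : ℕ := sSup {n | ∃ v ∈ X, gdist X (0, 0) v = n}

def EquivStep (t : ℕ) (C C' : GPath2) : Prop := ∃ v, equivAt t v (pathSet C) (pathSet C')

/-- `t` is safe for `C`: some chain `C ≡'_t C₁ ≡'_t … ≡'_t C'` ends in a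
configuration of radius `> t`. -/
def Safe (t : ℕ) (C : GPath2) : Prop :=
  ∃ C' : GPath2, Relation.ReflTransGen (EquivStep t) C C' ∧ t < rad (pathSet C')

/-- The minimum firing time of `C` for g-2PATH: the least unsafe time. -/
noncomputable def mft (C : GPath2) : ℕ := sInf {t | ¬ Safe t C}

/-- `T̃ = min_{r ≤ i ≤ 0 ≤ j ≤ s} max {−2i + j + g(i,j), 2j − i + f(i,j)}`. -/
noncomputable def Ttilde (C : GPath2) : ENat :=
  sInf {x : ENat | ∃ i j : ℤ, C.r ≤ i ∧ i ≤ 0 ∧ 0 ≤ j ∧ j ≤ C.s ∧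
    x = max (((-2 * i + j).toNat : ENat) + gval C i j)
            (((2 * j - i).toNat : ENat) + fval C i j)}

/-- The left hand `p_r … p_0` of `C` is free. -/
def FreeLeft (C : GPath2) : Prop := C.r = 0 ∨ (C.r < 0 ∧ fval C (C.r + 1) C.s = ⊤)

/-- The right hand `p_0 … p_s` of `C` is free. -/
def FreeRight (C : GPath2) : Prop := C.s = 0 ∨ (0 < C.s ∧ gval C C.r (C.s - 1) = ⊤)

/-!
Moving `p_i` from the sub-path into the left extension turns `(x0, x1) ∈ W(i,j)` into
`(x0 p_i, x1) ∈ W(i+1,j)`, so `V(i,j) ⊆ V(i+1,j)`. Conversely, `(i+1,j)` lies in `K` or, as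
`W(i,j)` is finite, in `I`, so `NI(i+1,j)` holds: a right part `x1` of `W(i+1,j)` combines with
`y0 p_i` for any `(y0, y1) ∈ W(i,j)`. Moving `p_i` back out of `y0 p_i` is harmless because the
boundary condition of `p_i` only involves `p_{i-1}` and `p_{i+1}`, which `(y0, y1)` and `(y0, x1)`
share; hence `x1 ∈ V(i,j)`. The statement about `U` is the mirror image.
-/

open Set

section Path

variable {f g : ℤ → ℤ × ℤ} {a b a' b' m : ℤ}

theorem IsPathOn.congr (h : IsPathOn f a b) (hfg : EqOn f g (Icc a b)) : IsPathOn g a b := by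
  obtain ⟨ha, hb, h0, hadj, hinj, hnt⟩ := h
  refine ⟨ha, hb, hfg ⟨ha, hb⟩ ▸ h0, fun m hm hms => ?_, fun m n hm hm' hn hn' hmn => ?_,
    fun m n hm hmn hn => ?_⟩
  · rw [← hfg ⟨hm, hms.le⟩, ← hfg ⟨by omega, hms⟩]
    exact hadj m hm hms
  · rw [← hfg ⟨hm, hm'⟩, ← hfg ⟨hn, hn'⟩] at hmn
    exact hinj m n hm hm' hn hn' hmn
  · rw [← hfg ⟨hm, by omega⟩, ← hfg ⟨by omega, hn⟩]
    exact hnt m n hm hmn hn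

theorem IsPathOn.bcond_image (h : IsPathOn f a b) (hm : m ∈ Icc a b) :
    bcond (f '' Icc a b) (f m) = f '' (Icc a b ∩ {m - 1, m + 1}) := by
  obtain ⟨-, -, -, hadj, -, hnt⟩ := h
  obtain ⟨hma, hmb⟩ := hm
  ext q
  constructor
  · rintro ⟨⟨n, hn, rfl⟩, hmn⟩
    refine ⟨n, ⟨hn, ?_⟩, rfl⟩
    simp only [mem_insert_iff, mem_singleton_iff]
    by_contra! hne
    rcases lt_trichotomy n m with hlt | rfl | hgt
    · exact hnt n m hn.1 (by omega) hmb (gridAdj_symm hmn)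
    · exact gridAdj_irrefl _ hmn
    · exact hnt m n hma (by omega) hn.2 hmn
  · rintro ⟨n, ⟨hn, rfl | rfl⟩, rfl⟩
    · exact ⟨⟨_, hn, rfl⟩, gridAdj_symm (by simpa using hadj (m - 1) hn.1 (by omega))⟩
    · exact ⟨⟨_, hn, rfl⟩, hadj m hma (by linarith [hn.2])⟩

theorem IsPathOn.bcond_image_eq (hf : IsPathOn f a b) (hg : IsPathOn g a' b')
    (hm : m ∈ Icc a b) (hm' : m ∈ Icc a' b')
    (hN : Icc a b ∩ {m - 1, m + 1} = Icc a' b' ∩ {m - 1, m + 1})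
    (hfg : EqOn f g (Icc a b ∩ {m - 1, m + 1})) :
    bcond (f '' Icc a b) (f m) = bcond (g '' Icc a' b') (g m) := by
  rw [hf.bcond_image hm, hg.bcond_image hm', ← hN, hfg.image_eq]

end Path

/-- `IsExtPair` for an extension given as a function on `[a, b]` instead of two lists, so that
moving `p_i` or `p_j` between the sub-path and a list only narrows `[i, j]`. -/
def IsExtOn (C : GPath2) (i j a b : ℤ) (f : ℤ → ℤ × ℤ) : Prop :=
  C.r ≤ i ∧ i ≤ 0 ∧ 0 ≤ j ∧ j ≤ C.s ∧ IsPathOn f a b ∧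
    ∀ m, i ≤ m → m ≤ j → bcond (pathSet C) (C.p m) = bcond (f '' Icc a b) (C.p m)

section Extension

variable {C : GPath2} {i j a b m : ℤ} {f g : ℤ → ℤ × ℤ} {x0 x1 y0 y1 : List (ℤ × ℤ)}

theorem isExtPair_iff :
    IsExtPair C i j x0 x1 ↔ IsExtOn C i j (i - x0.length) (j + x1.length) (extFun C i j x0 x1) :=
  Iff.rfl

theorem IsExtOn.congr (h : IsExtOn C i j a b f) (hfg : EqOn f g (Icc a b)) :
    IsExtOn C i j a b g := by
  obtain ⟨hri, hi, hj, hjs, hpath, hbc⟩ := h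
  exact ⟨hri, hi, hj, hjs, hpath.congr hfg, fun m hm hm' => hfg.image_eq ▸ hbc m hm hm'⟩

theorem IsExtOn.isPathOn (h : IsExtOn C i j a b f) : IsPathOn f a b :=
  h.2.2.2.2.1

theorem IsExtOn.succ_left (h : IsExtOn C i j a b f) (hi : i + 1 ≤ 0) :
    IsExtOn C (i + 1) j a b f := by
  obtain ⟨hri, -, hj, hjs, hpath, hbc⟩ := h
  exact ⟨by omega, hi, hj, hjs, hpath, fun m hm hm' => hbc m (by omega) hm'⟩

theorem IsExtOn.pred_right (h : IsExtOn C i j a b f) (hj : 0 ≤ j - 1) :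
    IsExtOn C i (j - 1) a b f := by
  obtain ⟨hri, hi, -, hjs, hpath, hbc⟩ := h
  exact ⟨hri, hi, hj, by omega, hpath, fun m hm hm' => hbc m hm (by omega)⟩

theorem IsExtOn.of_succ_left (h : IsExtOn C (i + 1) j a b f) (hri : C.r ≤ i)
    (hbc : bcond (pathSet C) (C.p i) = bcond (f '' Icc a b) (C.p i)) :
    IsExtOn C i j a b f := by
  obtain ⟨-, hi, hj, hjs, hpath, hbc'⟩ := h
  refine ⟨hri, by omega, hj, hjs, hpath, fun m hm hm' => ?_⟩
  rcases hm.eq_or_lt with rfl | hlt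
  exacts [hbc, hbc' m hlt hm']

theorem IsExtOn.of_pred_right (h : IsExtOn C i (j - 1) a b f) (hjs : j ≤ C.s)
    (hbc : bcond (pathSet C) (C.p j) = bcond (f '' Icc a b) (C.p j)) :
    IsExtOn C i j a b f := by
  obtain ⟨hri, hi, hj, -, hpath, hbc'⟩ := h
  refine ⟨hri, hi, by omega, hjs, hpath, fun m hm hm' => ?_⟩
  rcases hm'.eq_or_lt with rfl | hlt
  exacts [hbc, hbc' m hm (by omega)]

theorem extFun_of_mem (hi : i ≤ m) (hj : m ≤ j) : extFun C i j x0 x1 m = C.p m := by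
  simp only [extFun, if_neg (not_lt.2 hi), if_pos hj]

theorem extFun_append_left (hij : i ≤ j) (hm : i - x0.length ≤ m) :
    extFun C (i + 1) j (x0 ++ [C.p i]) x1 m = extFun C i j x0 x1 m := by
  rcases lt_trichotomy m i with hlt | rfl | hgt
  · have hidx : (m - (i + 1 - ((x0 ++ [C.p i]).length : ℤ))).toNat =
        (m - (i - x0.length)).toNat := by simp
    simp only [extFun, if_pos hlt, if_pos (by omega : m < i + 1), hidx]
    exact List.getD_append _ _ _ _ (by omega)
  · rw [extFun_of_mem le_rfl hij]
    simp [extFun]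
  · simp only [extFun, if_neg (by omega : ¬ m < i + 1), if_neg (by omega : ¬ m < i)]

theorem extFun_cons_right :
    extFun C i (j - 1) x0 (C.p j :: x1) = extFun C i j x0 x1 := by
  funext m
  simp only [extFun]
  split_ifs <;> first | rfl | omega | skip
  · obtain rfl : m = j := by omega
    simp
  · rw [show (m - (j - 1 + 1)).toNat = (m - (j + 1)).toNat + 1 by omega, List.getD_cons_succ]

theorem extFun_eq_of_le (hm : m ≤ j) : extFun C i j x0 x1 m = extFun C i j x0 y1 m := by
  simp only [extFun]
  split_ifs <;> rfl

theorem extFun_eq_of_ge (hm : i ≤ m) : extFun C i j x0 x1 m = extFun C i j y0 x1 m := by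
  simp only [extFun, if_neg (not_lt.2 hm)]

theorem IsExtPair.append_left (h : IsExtPair C i j x0 x1) (hi : i + 1 ≤ 0) :
    IsExtPair C (i + 1) j (x0 ++ [C.p i]) x1 := by
  have hlen : i + 1 - ((x0 ++ [C.p i]).length : ℤ) = i - x0.length := by simp
  have hj : 0 ≤ j := h.2.2.1
  rw [isExtPair_iff, hlen]
  exact (IsExtOn.succ_left h hi).congr fun m hm => (extFun_append_left (by omega) hm.1).symm

theorem IsExtPair.cons_right (h : IsExtPair C i j x0 x1) (hj : 0 ≤ j - 1) :
    IsExtPair C i (j - 1) x0 (C.p j :: x1) := by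
  have hlen : j - 1 + ((C.p j :: x1).length : ℤ) = j + x1.length := by simp
  rw [isExtPair_iff, hlen, extFun_cons_right]
  exact IsExtOn.pred_right h hj

theorem IsExtPair.of_append_left (h : IsExtPair C (i + 1) j (x0 ++ [C.p i]) x1)
    (h' : IsExtPair C i j x0 y1) : IsExtPair C i j x0 x1 := by
  have hlen : i + 1 - ((x0 ++ [C.p i]).length : ℤ) = i - x0.length := by simp
  have hi : i + 1 ≤ 0 := h.2.1
  have hj : 0 ≤ j := h.2.2.1
  rw [isExtPair_iff, hlen] at h
  have hf := h.congr fun m hm => extFun_append_left (x1 := x1) (by omega) hm.1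
  obtain ⟨hri, -, -, -, hg, hbc⟩ := h'
  refine hf.of_succ_left hri ?_
  have hN : Icc (i - x0.length) (j + (y1.length : ℤ)) ∩ {i - 1, i + 1} =
      Icc (i - x0.length) (j + x1.length) ∩ {i - 1, i + 1} := by
    ext n
    simp only [mem_inter_iff, mem_Icc, mem_insert_iff, mem_singleton_iff]
    omega
  have hbc' := hg.bcond_image_eq hf.isPathOn (m := i) ⟨by omega, by omega⟩
    ⟨by omega, by omega⟩ hN
    (fun n ⟨_, hn⟩ => extFun_eq_of_le (by rcases hn with rfl | rfl <;> omega))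
  rw [extFun_of_mem le_rfl (by omega), extFun_of_mem le_rfl (by omega)] at hbc'
  rw [← hbc']
  exact hbc i le_rfl (by omega)

theorem IsExtPair.of_cons_right (h : IsExtPair C i (j - 1) x0 (C.p j :: x1))
    (h' : IsExtPair C i j y0 x1) : IsExtPair C i j x0 x1 := by
  have hlen : j - 1 + ((C.p j :: x1).length : ℤ) = j + x1.length := by simp
  have hi : i ≤ 0 := h.2.1
  have hj : 0 ≤ j - 1 := h.2.2.1
  rw [isExtPair_iff, hlen, extFun_cons_right] at h
  obtain ⟨-, -, -, hjs, hg, hbc⟩ := h'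
  refine h.of_pred_right hjs ?_
  have hN : Icc (i - (y0.length : ℤ)) (j + x1.length) ∩ {j - 1, j + 1} =
      Icc (i - x0.length) (j + x1.length) ∩ {j - 1, j + 1} := by
    ext n
    simp only [mem_inter_iff, mem_Icc, mem_insert_iff, mem_singleton_iff]
    omega
  have hbc' := hg.bcond_image_eq h.isPathOn (m := j) ⟨by omega, by omega⟩
    ⟨by omega, by omega⟩ hN
    (fun n ⟨_, hn⟩ => extFun_eq_of_ge (by rcases hn with rfl | rfl <;> omega))
  rw [extFun_of_mem (by omega) le_rfl, extFun_of_mem (by omega) le_rfl] at hbc'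
  rw [← hbc']
  exact hbc j (by omega) le_rfl

end Extension

section Noninterference

variable {C : GPath2} {i j : ℤ}

/-- Witnessed by `C` itself: `p_r … p_{i-1}` and `p_{j+1} … p_s` extend `p_i … p_j`. -/
theorem Wset_nonempty (hri : C.r ≤ i) (hi : i ≤ 0) (hj : 0 ≤ j) (hjs : j ≤ C.s) :
    (Wset C i j).Nonempty := by
  set x0 := (List.range (i - C.r).toNat).map fun k : ℕ => C.p (C.r + k)
  set x1 := (List.range (C.s - j).toNat).map fun k : ℕ => C.p (j + 1 + k)
  have ha : i - (x0.length : ℤ) = C.r := by simp only [x0, List.length_map, List.length_range]; omega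
  have hb : j + (x1.length : ℤ) = C.s := by simp only [x1, List.length_map, List.length_range]; omega
  have hf : EqOn C.p (extFun C i j x0 x1) (Icc C.r C.s) := by
    rintro m ⟨hrm, hms⟩
    simp only [extFun]
    split_ifs with h1 h2
    · rw [ha]
      simp only [x0, List.getD_eq_getElem?_getD, List.getElem?_map,
        List.getElem?_range (by omega : (m - C.r).toNat < (i - C.r).toNat), Option.map_some,
        Option.getD_some]
      congr 1
      omega
    · rfl
    · simp only [x1, List.getD_eq_getElem?_getD, List.getElem?_map,
        List.getElem?_range (by omega : (m - (j + 1)).toNat < (C.s - j).toNat), Option.map_some,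
        Option.getD_some]
      congr 1
      omega
  refine ⟨(x0, x1), ?_⟩
  change IsExtOn C i j (i - x0.length) (j + x1.length) (extFun C i j x0 x1)
  rw [ha, hb]
  exact ⟨hri, hi, hj, hjs, C.isPath.congr hf, fun m _ _ => by rw [pathSet, hf.image_eq]⟩

theorem NI_succ_left (hCNI : CNI C) (hK : (i, j) ∈ Kset C) (hi : i + 1 ≤ 0) :
    NI C (i + 1) j := by
  obtain ⟨hri, -, hj, hjs, hfin⟩ :
      C.r ≤ i ∧ i ≤ 0 ∧ 0 ≤ j ∧ j ≤ C.s ∧ (Wset C i j).Finite := hK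
  by_cases hfin' : (Wset C (i + 1) j).Finite
  · exact hCNI (i + 1, j) (.inl (.inl ⟨by omega, hi, hj, hjs, hfin'⟩))
  · exact hCNI (i + 1, j) (.inl (.inr ⟨by omega, hi, hj, hjs, hfin', by simpa using hfin⟩))

theorem NI_pred_right (hCNI : CNI C) (hK : (i, j) ∈ Kset C) (hj : 0 ≤ j - 1) :
    NI C i (j - 1) := by
  obtain ⟨hri, hi, -, hjs, hfin⟩ :
      C.r ≤ i ∧ i ≤ 0 ∧ 0 ≤ j ∧ j ≤ C.s ∧ (Wset C i j).Finite := hK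
  by_cases hfin' : (Wset C i (j - 1)).Finite
  · exact hCNI (i, j - 1) (.inl (.inl ⟨hri, hi, hj, by omega, hfin'⟩))
  · exact hCNI (i, j - 1) (.inr ⟨hri, hi, hj, by omega, hfin', by simpa using hfin⟩)

theorem Vset_eq_succ_left (hNI : NI C (i + 1) j) (hne : (Wset C i j).Nonempty)
    (hi : i + 1 ≤ 0) : Vset C i j = Vset C (i + 1) j := by
  refine Subset.antisymm ?_ ?_
  · rintro _ ⟨⟨x0, x1⟩, hx, rfl⟩
    exact ⟨(x0 ++ [C.p i], x1), IsExtPair.append_left hx hi, rfl⟩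
  · rintro _ ⟨⟨x0, x1⟩, hx, rfl⟩
    obtain ⟨⟨y0, y1⟩, hy⟩ := hne
    have hyx : (y0 ++ [C.p i], x1) ∈ Wset C (i + 1) j := by
      rw [hNI]
      exact ⟨⟨(y0 ++ [C.p i], y1), IsExtPair.append_left hy hi, rfl⟩,
        ⟨(x0, x1), hx, rfl⟩⟩
    exact ⟨(y0, x1), IsExtPair.of_append_left hyx hy, rfl⟩

theorem Uset_eq_pred_right (hNI : NI C i (j - 1)) (hne : (Wset C i j).Nonempty)
    (hj : 0 ≤ j - 1) : Uset C i j = Uset C i (j - 1) := by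
  refine Subset.antisymm ?_ ?_
  · rintro _ ⟨⟨x0, x1⟩, hx, rfl⟩
    exact ⟨(x0, C.p j :: x1), IsExtPair.cons_right hx hj, rfl⟩
  · rintro _ ⟨⟨x0, x1⟩, hx, rfl⟩
    obtain ⟨⟨y0, y1⟩, hy⟩ := hne
    have hxy : (x0, C.p j :: y1) ∈ Wset C i (j - 1) := by
      rw [hNI]
      exact ⟨⟨(x0, x1), hx, rfl⟩, ⟨(y0, C.p j :: y1), IsExtPair.cons_right hy hj, rfl⟩⟩
    exact ⟨(x0, y1), IsExtPair.of_cons_right hxy hy, rfl⟩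

end Noninterference

theorem stmt7 (C : GPath2) (hCNI : CNI C) :
    (∀ i j : ℤ, (i, j) ∈ Kset C → i + 1 ≤ 0 → Vset C i j = Vset C (i + 1) j) ∧
    (∀ i j : ℤ, (i, j) ∈ Kset C → 0 ≤ j - 1 → Uset C i j = Uset C i (j - 1)) := by
  have hne : ∀ i j, (i, j) ∈ Kset C → (Wset C i j).Nonempty :=
    fun _ _ hK => Wset_nonempty hK.1 hK.2.1 hK.2.2.1 hK.2.2.2.1
  exact ⟨fun i j hK hi => Vset_eq_succ_left (NI_succ_left hCNI hK hi) (hne i j hK) hi,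
    fun i j hK hj => Uset_eq_pred_right (NI_pred_right hCNI hK hj) (hne i j hK) hj⟩
end

section
/- If the left hand of a configuration C = p_r … p_s of g-2PATH is free, then −2r + s ≤ mft_{g-2PATH}(C) ≤ −r + s + max{−r, s}. -/
open scoped Classical

/-!
Along the path, graph distance in `pathSet C` is index distance, so the radius of `C` is
`max (-r) s` and the local map of `p_k` at time `t` consists of the `p_m` with
`|m| + |k - m| ≤ t`.

From time `s - r + max (-r) s` on, every local map covers the whole path together with its
boundary conditions; these close the path off, so a connected configuration with the same local
map at some node is the same set of positions. Hence no chain of equivalences raises the radius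
and that time is unsafe.

Below `-2r + s`, the local map of the right end `p_s` misses `p_r`. A free left hand provides
consistent extensions `x₀ p_{r+1} … p_s` with `x₀` arbitrarily long; such an extension has the
same local map at `p_s` as `C` but radius larger than `t`, so `t` is safe.
-/

open Set SimpleGraph

namespace GPath2

variable (C : GPath2)

lemma r_nonpos : C.r ≤ 0 := C.isPath.1

lemma s_nonneg : 0 ≤ C.s := C.isPath.2.1

lemma p_zero : C.p 0 = (0, 0) := C.isPath.2.2.1

lemma zero_mem_Icc : (0 : ℤ) ∈ Icc C.r C.s := ⟨C.r_nonpos, C.s_nonneg⟩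

variable {C}

lemma p_mem_pathSet {m : ℤ} (hm : m ∈ Icc C.r C.s) : C.p m ∈ pathSet C :=
  mem_image_of_mem _ hm

lemma p_injOn : InjOn C.p (Icc C.r C.s) := fun a ha b hb h =>
  C.isPath.2.2.2.2.1 a b ha.1 ha.2 hb.1 hb.2 h

lemma natAbs_sub_eq_one_of_gridAdj {a b : ℤ} (ha : a ∈ Icc C.r C.s) (hb : b ∈ Icc C.r C.s)
    (h : gridAdj (C.p a) (C.p b)) : (a - b).natAbs = 1 := by
  have hnot := C.isPath.2.2.2.2.2
  rcases lt_trichotomy a b with hab | rfl | hab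
  · by_contra; exact hnot a b ha.1 (by omega) hb.2 h
  · exact absurd h (gridAdj_irrefl _)
  · by_contra; exact hnot b a hb.1 (by omega) ha.2 (gridAdj_symm h)

lemma adj_p_succ {a : ℤ} (h1 : C.r ≤ a) (h2 : a < C.s) :
    (gridGraph (pathSet C)).Adj (C.p a) (C.p (a + 1)) :=
  ⟨p_mem_pathSet ⟨h1, h2.le⟩, p_mem_pathSet ⟨by omega, h2⟩, C.isPath.2.2.2.1 a h1 h2⟩

lemma exists_walk_length_eq (n : ℕ) {a : ℤ} (h1 : C.r ≤ a) (h2 : a + n ≤ C.s) :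
    ∃ w : (gridGraph (pathSet C)).Walk (C.p a) (C.p (a + n)), w.length = n := by
  induction n generalizing a with
  | zero => exact ⟨Walk.nil.copy rfl (by simp), by simp⟩
  | succ n ih =>
    obtain ⟨w, hw⟩ := ih (a := a + 1) (by omega) (by push_cast at h2; omega)
    exact ⟨(Walk.cons (adj_p_succ h1 (by push_cast at h2; omega)) w).copy rfl
      (by push_cast; ring_nf), by simp [hw]⟩

lemma exists_walk_length_eq_natAbs {a b : ℤ} (ha : a ∈ Icc C.r C.s) (hb : b ∈ Icc C.r C.s) :
    ∃ w : (gridGraph (pathSet C)).Walk (C.p a) (C.p b), w.length = (b - a).natAbs := by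
  have := ha.2
  have := hb.2
  rcases le_total a b with hab | hab
  · obtain ⟨w, hw⟩ := exists_walk_length_eq (b - a).toNat ha.1 (by omega)
    exact ⟨w.copy rfl (by congr 1; omega), by simp only [Walk.length_copy, hw]; omega⟩
  · obtain ⟨w, hw⟩ := exists_walk_length_eq (a - b).toNat hb.1 (by omega)
    exact ⟨(w.copy rfl (by congr 1; omega)).reverse,
      by simp only [Walk.length_reverse, Walk.length_copy, hw]; omega⟩

lemma reachable_p_p {a b : ℤ} (ha : a ∈ Icc C.r C.s) (hb : b ∈ Icc C.r C.s) :
    (gridGraph (pathSet C)).Reachable (C.p a) (C.p b) :=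
  (exists_walk_length_eq_natAbs ha hb).elim fun w _ => w.reachable

lemma reachable_of_mem_pathSet :
    ∀ u ∈ pathSet C, ∀ v ∈ pathSet C, (gridGraph (pathSet C)).Reachable u v := by
  rintro _ ⟨a, ha, rfl⟩ _ ⟨b, hb, rfl⟩
  exact reachable_p_p ha hb

lemma natAbs_sub_le_length {u v : ℤ × ℤ} (w : (gridGraph (pathSet C)).Walk u v) {a b : ℤ}
    (ha : a ∈ Icc C.r C.s) (hb : b ∈ Icc C.r C.s) (hu : C.p a = u) (hv : C.p b = v) :
    (a - b).natAbs ≤ w.length := by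
  induction w generalizing a with
  | nil => simp [p_injOn ha hb (hu.trans hv.symm)]
  | cons h w ih =>
    obtain ⟨c, hc, rfl⟩ := h.2.1
    have hac := natAbs_sub_eq_one_of_gridAdj ha hc (hu ▸ h.2.2)
    have hcb := ih hc rfl hv
    rw [Walk.length_cons]
    omega

lemma gdist_p_p {a b : ℤ} (ha : a ∈ Icc C.r C.s) (hb : b ∈ Icc C.r C.s) :
    gdist (pathSet C) (C.p a) (C.p b) = (b - a).natAbs := by
  obtain ⟨w, hw⟩ := exists_walk_length_eq_natAbs ha hb
  obtain ⟨w', hw'⟩ := w.reachable.exists_walk_length_eq_dist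
  have := natAbs_sub_le_length w' ha hb rfl rfl
  refine le_antisymm (hw ▸ dist_le w) ?_
  unfold gdist
  omega

lemma gdist_origin_p {m : ℤ} (hm : m ∈ Icc C.r C.s) :
    gdist (pathSet C) (0, 0) (C.p m) = m.natAbs := by
  rw [← C.p_zero, gdist_p_p C.zero_mem_Icc hm, sub_zero]

lemma toNat_max_mem_upperBounds :
    (max (-C.r) C.s).toNat ∈
      upperBounds {n | ∃ v ∈ pathSet C, gdist (pathSet C) (0, 0) v = n} := by
  rintro n ⟨_, ⟨m, ⟨hr, hs⟩, rfl⟩, rfl⟩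
  rw [gdist_origin_p ⟨hr, hs⟩]
  omega

lemma rad_le : rad (pathSet C) ≤ (max (-C.r) C.s).toNat :=
  csSup_le ⟨0, (0, 0), C.p_zero ▸ p_mem_pathSet C.zero_mem_Icc, dist_self⟩
    toNat_max_mem_upperBounds

lemma natAbs_le_rad {m : ℤ} (hm : m ∈ Icc C.r C.s) : m.natAbs ≤ rad (pathSet C) :=
  le_csSup ⟨_, toNat_max_mem_upperBounds⟩ ⟨C.p m, p_mem_pathSet hm, gdist_origin_p hm⟩

variable (C) in
lemma rad_pathSet : (rad (pathSet C) : ℤ) = max (-C.r) C.s := by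
  have := C.r_nonpos
  have := C.s_nonneg
  have := rad_le (C := C)
  have := natAbs_le_rad (C := C) (m := C.r) ⟨le_rfl, by omega⟩
  have := natAbs_le_rad (C := C) (m := C.s) ⟨by omega, le_rfl⟩
  omega

lemma Mset_pathSet {k : ℤ} (hk : k ∈ Icc C.r C.s) (t : ℕ) :
    Mset (C.p k) t (pathSet C) = C.p '' {m ∈ Icc C.r C.s | m.natAbs + (k - m).natAbs ≤ t} := by
  ext w
  constructor
  · rintro ⟨⟨m, hm, rfl⟩, hle⟩
    rw [gdist_origin_p hm, gdist_p_p hm hk] at hle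
    exact ⟨m, ⟨hm, hle⟩, rfl⟩
  · rintro ⟨m, ⟨hm, hle⟩, rfl⟩
    exact ⟨p_mem_pathSet hm, by rwa [gdist_origin_p hm, gdist_p_p hm hk]⟩

lemma ai_pathSet {k : ℤ} (hk : k ∈ Icc C.r C.s) {t : ℕ} (hkt : k.natAbs ≤ t) :
    ai (C.p k) t (pathSet C) = some (t, C.p k,
      (fun m => (C.p m, bcond (pathSet C) (C.p m))) ''
        {m ∈ Icc C.r C.s | m.natAbs + (k - m).natAbs ≤ t}) := by
  have hreach : (gridGraph (pathSet C)).Reachable (0, 0) (C.p k) :=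
    C.p_zero ▸ reachable_p_p C.zero_mem_Icc hk
  rw [ai, if_pos ⟨p_mem_pathSet hk, hreach, by rwa [gdist_origin_p hk]⟩, Mset_pathSet hk,
    image_image]

end GPath2

lemma mem_of_walk_of_bcond_eq {X Y : Set (ℤ × ℤ)} (hbc : ∀ z ∈ X, bcond Y z = bcond X z)
    {u v : ℤ × ℤ} (w : (gridGraph Y).Walk u v) (hu : u ∈ X) : v ∈ X := by
  induction w with
  | nil => exact hu
  | cons h _ ih =>
    have hx : _ ∈ bcond Y _ := ⟨h.2.1, h.2.2⟩
    rw [hbc _ hu] at hx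
    exact ih hx.1

lemma eq_of_ai_eq {X Y : Set (ℤ × ℤ)} {v : ℤ × ℤ} {t : ℕ} (hX : Mset v t X = X)
    (hY : ∀ p ∈ Y, ∀ q ∈ Y, (gridGraph Y).Reachable p q)
    (h : ai v t X = ai v t Y) (hne : ai v t X ≠ none) : Y = X := by
  unfold ai at h hne
  split_ifs at h hne with hcX hcY
  · simp only [Option.some.injEq, Prod.mk.injEq, true_and, hX] at h
    have hXY : ∀ z ∈ X, z ∈ Y ∧ bcond Y z = bcond X z := by
      intro z hz
      obtain ⟨z', hz', hzz'⟩ : (z, bcond X z) ∈ (fun w => (w, bcond Y w)) '' Mset v t Y :=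
        h ▸ mem_image_of_mem _ hz
      obtain ⟨rfl, hbc⟩ := Prod.mk.inj hzz'
      exact ⟨hz'.1, hbc⟩
    refine Subset.antisymm (fun y hy => ?_) fun z hz => (hXY z hz).1
    obtain ⟨w⟩ := hY v hcY.1 y hy
    exact mem_of_walk_of_bcond_eq (fun z hz => (hXY z hz).2) w hcX.1
  · exact absurd rfl hne

namespace GPath2

variable {C : GPath2}

lemma Mset_eq_pathSet {t : ℕ} (ht : C.s - C.r + max (-C.r) C.s ≤ t) :
    ∀ v ∈ pathSet C, Mset v t (pathSet C) = pathSet C := by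
  rintro _ ⟨k, hk, rfl⟩
  rw [Mset_pathSet hk, sep_eq_self_iff_mem_true.2 fun m hm => by
    have := hk.1; have := hk.2; have := hm.1; have := hm.2; omega]
  rfl

lemma pathSet_eq_of_equivStep {D : GPath2} {t : ℕ}
    (hM : ∀ v ∈ pathSet C, Mset v t (pathSet C) = pathSet C) (h : EquivStep t C D) :
    pathSet D = pathSet C :=
  let ⟨v, hv, _, hai, hne⟩ := h
  eq_of_ai_eq (hM v hv) reachable_of_mem_pathSet hai hne

lemma pathSet_eq_of_reflTransGen {D : GPath2} {t : ℕ} (ht : C.s - C.r + max (-C.r) C.s ≤ t)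
    (h : Relation.ReflTransGen (EquivStep t) C D) : pathSet D = pathSet C := by
  induction h with
  | refl => rfl
  | tail _ hstep ih =>
    refine (pathSet_eq_of_equivStep ?_ hstep).trans ih
    rw [ih]
    exact Mset_eq_pathSet ht

lemma not_safe_of_le {t : ℕ} (ht : C.s - C.r + max (-C.r) C.s ≤ t) : ¬ Safe t C := by
  rintro ⟨D, hCD, hrad⟩
  rw [pathSet_eq_of_reflTransGen ht hCD] at hrad
  have := rad_pathSet C
  have := C.r_nonpos
  have := C.s_nonneg
  omega

lemma mft_le : (mft C : ℤ) ≤ -C.r + C.s + max (-C.r) C.s := by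
  have := C.r_nonpos
  have := C.s_nonneg
  have := Nat.sInf_le (s := {t | ¬ Safe t C})
    (not_safe_of_le (t := (C.s - C.r + max (-C.r) C.s).toNat) (by omega))
  unfold mft
  omega

lemma equivStep_of_agree {D : GPath2} {t : ℕ} {a b k : ℤ}
    (hC : Icc a b ⊆ Icc C.r C.s) (hD : Icc a b ⊆ Icc D.r D.s)
    (hp : ∀ m ∈ Icc a b, D.p m = C.p m)
    (hbc : ∀ m ∈ Icc a b, bcond (pathSet D) (C.p m) = bcond (pathSet C) (C.p m))
    (hk : k ∈ Icc a b) (hkt : k.natAbs ≤ t)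
    (hMC : ∀ m ∈ Icc C.r C.s, m.natAbs + (k - m).natAbs ≤ t → m ∈ Icc a b)
    (hMD : ∀ m ∈ Icc D.r D.s, m.natAbs + (k - m).natAbs ≤ t → m ∈ Icc a b) :
    EquivStep t C D := by
  have hsep : ∀ {r s : ℤ}, Icc a b ⊆ Icc r s →
      (∀ m ∈ Icc r s, m.natAbs + (k - m).natAbs ≤ t → m ∈ Icc a b) →
      {m ∈ Icc r s | m.natAbs + (k - m).natAbs ≤ t} =
        {m ∈ Icc a b | m.natAbs + (k - m).natAbs ≤ t} := fun hsub hM =>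
    Subset.antisymm (fun m hm => ⟨hM m hm.1 hm.2, hm.2⟩) fun m hm => ⟨hsub hm.1, hm.2⟩
  have hai : ai (C.p k) t (pathSet C) = ai (C.p k) t (pathSet D) := by
    have haiD := ai_pathSet (hD hk) hkt
    rw [hp k hk] at haiD
    rw [haiD, ai_pathSet (hC hk) hkt, hsep hC hMC, hsep hD hMD]
    congr 3
    refine image_congr fun m hm => ?_
    rw [hp m hm.1, hbc m hm.1]
  refine ⟨C.p k, p_mem_pathSet (hC hk), hp k hk ▸ p_mem_pathSet (hD hk), hai, ?_⟩
  rw [ai_pathSet (hC hk) hkt]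
  exact Option.some_ne_none _

lemma exists_isExtPair_length_gt {i j : ℤ} (h : fval C i j = ⊤) (N : ℕ) :
    ∃ x0 x1, IsExtPair C i j x0 x1 ∧ N < x0.length := by
  obtain ⟨_, ⟨⟨x0, x1⟩, hx, rfl⟩, hlt⟩ :=
    (iSup₂_eq_top _).1 h N (ENat.natCast_lt_top N)
  exact ⟨x0, x1, hx, by exact_mod_cast hlt⟩

end GPath2

namespace IsExtPair

variable {C : GPath2} {i j : ℤ} {x0 x1 : List (ℤ × ℤ)}

def toGPath2 (h : IsExtPair C i j x0 x1) : GPath2 :=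
  ⟨i - x0.length, j + x1.length, extFun C i j x0 x1, h.2.2.2.2.1⟩

lemma toGPath2_p (h : IsExtPair C i j x0 x1) {m : ℤ} (hm : m ∈ Icc i j) :
    h.toGPath2.p m = C.p m := by
  simp only [toGPath2, extFun, if_neg (not_lt.2 hm.1), if_pos hm.2]

lemma bcond_toGPath2 (h : IsExtPair C i j x0 x1) {m : ℤ} (hm : m ∈ Icc i j) :
    bcond (pathSet h.toGPath2) (C.p m) = bcond (pathSet C) (C.p m) :=
  (h.2.2.2.2.2 m hm.1 hm.2).symm

lemma eq_nil_right (h : IsExtPair C i C.s x0 x1) (hi : i < C.s) : x1 = [] := by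
  by_contra hne
  have hlen : 0 < x1.length := List.length_pos_iff.2 hne
  have hDr : h.toGPath2.r = i - x0.length := rfl
  have hDs : h.toGPath2.s = C.s + x1.length := rfl
  have hs : C.s ∈ Icc i C.s := ⟨hi.le, le_rfl⟩
  obtain ⟨⟨m, hm, hpm⟩, hadj⟩ : h.toGPath2.p (C.s + 1) ∈ bcond (pathSet C) (C.p C.s) := by
    rw [← h.bcond_toGPath2 hs, ← h.toGPath2_p hs]
    exact ⟨GPath2.p_mem_pathSet ⟨by omega, by omega⟩,
      h.toGPath2.isPath.2.2.2.1 C.s (by omega) (by omega)⟩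
  rw [← hpm] at hadj
  have hm1 := GPath2.natAbs_sub_eq_one_of_gridAdj ⟨h.1.trans hi.le, le_rfl⟩ hm hadj
  obtain rfl : m = C.s - 1 := by have := hm.2; omega
  have := GPath2.p_injOn (C := h.toGPath2) (x₁ := C.s - 1) ⟨by omega, by omega⟩
    (x₂ := C.s + 1) ⟨by omega, by omega⟩ ((h.toGPath2_p ⟨by omega, by omega⟩).trans hpm)
  omega

end IsExtPair

namespace GPath2

variable {C : GPath2}

lemma equivStep_toGPath2 {x0 x1 : List (ℤ × ℤ)} (h : IsExtPair C (C.r + 1) C.s x0 x1) {t : ℕ}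
    (hst : C.s ≤ t) (ht : t < -2 * C.r + C.s) : EquivStep t C h.toGPath2 := by
  have hDr : h.toGPath2.r = C.r + 1 - x0.length := rfl
  have hDs : h.toGPath2.s = C.s + x1.length := rfl
  have hr := C.r_nonpos
  have hs := C.s_nonneg
  -- `x1 = []` unless `r = -1` and `s = 0`; then `t = 1` and the local map of `p_0` is `p_0` alone
  have hx1 : C.r + 2 ≤ C.s → x1 = [] := fun hrs => h.eq_nil_right (by omega)
  refine equivStep_of_agree (a := C.r + 1) (b := C.s) (k := C.s)
    (Icc_subset_Icc (by omega) le_rfl) (Icc_subset_Icc (by omega) (by omega))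
    (fun m hm => h.toGPath2_p hm) (fun m hm => h.bcond_toGPath2 hm) ⟨by omega, le_rfl⟩
    (by omega) (fun m hm hmt => ⟨by omega, hm.2⟩) fun m hm hmt => ⟨by omega, ?_⟩
  rcases le_or_gt (C.r + 2) C.s with hrs | hrs
  · have hlen : x1.length = 0 := by rw [hx1 hrs, List.length_nil]
    have := hm.2
    omega
  · omega

lemma safe_of_lt (hfree : FreeLeft C) {t : ℕ} (ht : (t : ℤ) < -2 * C.r + C.s) : Safe t C := by
  have hrad := rad_pathSet C
  have hs := C.s_nonneg
  by_cases hlt : (t : ℤ) < max (-C.r) C.s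
  · exact ⟨C, .refl, by omega⟩
  obtain ⟨-, hf⟩ := hfree.resolve_left (by omega)
  obtain ⟨x0, x1, h, hlen⟩ := exists_isExtPair_length_gt hf t
  refine ⟨h.toGPath2, .single (equivStep_toGPath2 h (by omega) ht), ?_⟩
  have hDr : h.toGPath2.r = C.r + 1 - x0.length := rfl
  have := natAbs_le_rad (m := h.toGPath2.r)
    ⟨le_rfl, h.toGPath2.r_nonpos.trans h.toGPath2.s_nonneg⟩
  omega

lemma le_mft (hfree : FreeLeft C) : -2 * C.r + C.s ≤ (mft C : ℤ) := by
  have := C.r_nonpos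
  have hmft : ¬ Safe (mft C) C :=
    Nat.sInf_mem (s := {t | ¬ Safe t C})
      ⟨_, not_safe_of_le (C := C) (t := (C.s - C.r + max (-C.r) C.s).toNat) (by omega)⟩
  by_contra! h
  exact hmft (safe_of_lt hfree h)

end GPath2

theorem stmt9 (C : GPath2) (hfree : FreeLeft C) :
    -2 * C.r + C.s ≤ (mft C : ℤ) ∧ (mft C : ℤ) ≤ -C.r + C.s + max (-C.r) C.s :=
  ⟨GPath2.le_mft hfree, GPath2.mft_le⟩
end

section
/- A variation Γ of FSSP (with a solution) has a minimal-time solution if and only if the minimum solution size mss_Γ(C) is bounded: there is a constant c with mss_Γ(C) ≤ c for all configurations C of Γ. -/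
/-- The minimum firing time of a configuration `C` over all solutions. -/
noncomputable def mftAbs {Config Sol : Type*} (ft : Sol → Config → ℕ) (C : Config) : ℕ :=
  sInf {n | ∃ A, ft A C = n}

/-- The minimum solution size of `C`: the least number of states of a solution
firing `C` at time `mft(C)`. -/
noncomputable def mssAbs {Config Sol : Type*} (ft : Sol → Config → ℕ)
    (size : Sol → ℕ) (C : Config) : ℕ :=
  sInf {n | ∃ A, ft A C = mftAbs ft C ∧ size A = n}

theorem stmt15 {Config Sol : Type*} [Nonempty Sol]
    (ft : Sol → Config → ℕ) (size : Sol → ℕ)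
    -- there are only finitely many solutions with at most `c` states
    (hfin : ∀ c : ℕ, {A : Sol | size A ≤ c}.Finite)
    -- finitely many solutions can be combined into one firing as soon as any fires
    (hcomb : ∀ (S : Finset Sol) (hS : S.Nonempty),
      ∃ A : Sol, ∀ C : Config, ft A C = S.inf' hS fun B => ft B C) :
    (∃ Atil : Sol, ∀ C : Config, ft Atil C = mftAbs ft C) ↔
      ∃ c : ℕ, ∀ C : Config, mssAbs ft size C ≤ c := by
  -- for each C, there exists a witness achieving mss: a solution firing at mft
  have hmft : ∀ C : Config, ∃ A, ft A C = mftAbs ft C := by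
    intro C
    have : (mftAbs ft C) ∈ {n | ∃ A, ft A C = n} :=
      Nat.sInf_mem ⟨ft (Classical.arbitrary Sol) C, _, rfl⟩
    exact this
  have hmss : ∀ C : Config, ∃ A, ft A C = mftAbs ft C ∧ size A = mssAbs ft size C := by
    intro C
    obtain ⟨A, hA⟩ := hmft C
    have : (mssAbs ft size C) ∈ {n | ∃ A, ft A C = mftAbs ft C ∧ size A = n} :=
      Nat.sInf_mem ⟨size A, A, hA, rfl⟩
    exact this
  constructor
  · rintro ⟨Atil, hAtil⟩
    refine ⟨size Atil, fun C => Nat.sInf_le ⟨Atil, hAtil C, rfl⟩⟩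
  · rintro ⟨c, hc⟩
    by_cases hCfg : Nonempty Config
    · obtain ⟨C0⟩ := hCfg
      set S : Finset Sol := (hfin c).toFinset with hSdef
      have hSmem : ∀ A, A ∈ S ↔ size A ≤ c := by
        intro A; simp [hSdef, Set.Finite.mem_toFinset]
      have hSne : S.Nonempty := by
        obtain ⟨A, hA1, hA2⟩ := hmss C0
        exact ⟨A, (hSmem A).2 (hA2 ▸ hc C0)⟩
      obtain ⟨Atil, hAtil⟩ := hcomb S hSne
      refine ⟨Atil, fun C => ?_⟩
      rw [hAtil C]
      apply le_antisymm
      · obtain ⟨A, hA1, hA2⟩ := hmss C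
        have hAS : A ∈ S := (hSmem A).2 (hA2 ▸ hc C)
        calc S.inf' hSne (fun B => ft B C) ≤ ft A C := Finset.inf'_le _ hAS
          _ = mftAbs ft C := hA1
      · obtain ⟨B, hBS, hB⟩ := Finset.exists_mem_eq_inf' hSne (fun B => ft B C)
        rw [hB]
        exact Nat.sInf_le ⟨B, rfl⟩
    · exact ⟨Classical.arbitrary Sol, fun C => (hCfg ⟨C⟩).elim⟩
end
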